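/- Let {pᵗ} be a sequence in Ω_{k,p⁰,δ} with pᵗ⁺¹ a projection of pᵗ - (1/L)∇Q(pᵗ) onto Ω_{k,p⁰,δ}, L > λ₁. Then Q(pᵗ) - Q(pᵗ⁺¹) ≥ ((L-λ₁)/2)‖pᵗ⁺¹ - pᵗ‖₂² for all t, the sequence Q(pᵗ) converges, and ‖pᵗ⁺¹ - pᵗ‖₂ → 0. -/

import Mathlib

/-!
Since `pᵗ` is itself feasible, the projection `pᵗ⁺¹` is at least as close to the gradient step
`pᵗ - ∇Q(pᵗ)/L` as `pᵗ` is; expanding both squares gives `⟪d, ∇Q(pᵗ)⟫ ≤ -(L/2)‖d‖²` for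
`d = pᵗ⁺¹ - pᵗ`. The exact second-order expansion of `Q`, whose curvature
is at most `λ₁`, turns this into the descent `Q(pᵗ) - Q(pᵗ⁺¹) ≥ ((L - λ₁)/2)‖d‖²`. As `S` is positive
definite, `Q` is bounded below by its value at `S⁻¹f`, so the decreasing sequence `Q(pᵗ)` converges
and the descents, which dominate `‖d‖²`, tend to zero.
-/

open Matrix Filter

section QuadraticObjective

variable {ι : Type*} [Fintype ι]

noncomputable def quadraticObjective (S : Matrix ι ι ℝ) (f p : ι → ℝ) : ℝ :=
  1 / 2 * (p ⬝ᵥ S *ᵥ p) - f ⬝ᵥ p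

open scoped MatrixOrder in
theorem Matrix.IsHermitian.dotProduct_mulVec_le_of_eigenvalues_le [DecidableEq ι]
    {S : Matrix ι ι ℝ} (hS : S.IsHermitian) {c : ℝ} (hc : ∀ i, hS.eigenvalues i ≤ c)
    (x : ι → ℝ) : x ⬝ᵥ S *ᵥ x ≤ c * (x ⬝ᵥ x) := by
  have hle : S ≤ algebraMap ℝ _ c := le_algebraMap_of_spectrum_le (by
    rw [hS.spectrum_real_eq_range_eigenvalues]
    rintro _ ⟨i, rfl⟩
    exact hc i) hS.isSelfAdjoint
  have := (Matrix.le_iff.mp hle).dotProduct_mulVec_nonneg x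
  simpa only [star_trivial, Algebra.algebraMap_eq_smul_one, sub_mulVec, smul_mulVec, one_mulVec,
    dotProduct_sub, dotProduct_smul, smul_eq_mul, sub_nonneg] using this

theorem Matrix.IsSymm.dotProduct_mulVec_comm {S : Matrix ι ι ℝ} (hS : S.IsSymm) (u v : ι → ℝ) :
    u ⬝ᵥ S *ᵥ v = v ⬝ᵥ S *ᵥ u := by
  rw [dotProduct_mulVec, ← mulVec_transpose, hS.eq, dotProduct_comm]

theorem quadraticObjective_sub {S : Matrix ι ι ℝ} (hS : S.IsSymm) (f a b : ι → ℝ) :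
    quadraticObjective S f b - quadraticObjective S f a =
      (b - a) ⬝ᵥ (S *ᵥ a - f) + 1 / 2 * ((b - a) ⬝ᵥ S *ᵥ (b - a)) := by
  simp only [quadraticObjective, mulVec_sub, dotProduct_sub, sub_dotProduct]
  rw [hS.dotProduct_mulVec_comm a b, dotProduct_comm f a, dotProduct_comm f b]
  ring

theorem quadraticObjective_le_of_mulVec_eq {S : Matrix ι ι ℝ} (hS : S.PosSemidef) {f c : ι → ℝ}
    (hc : S *ᵥ c = f) (x : ι → ℝ) : quadraticObjective S f c ≤ quadraticObjective S f x := by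
  have hsymm : S.IsSymm := isHermitian_iff_isSymm.mp hS.1
  have hgap := quadraticObjective_sub hsymm f c x
  rw [hc, sub_self, dotProduct_zero, zero_add] at hgap
  have hnonneg := hS.dotProduct_mulVec_nonneg (x - c)
  rw [star_trivial] at hnonneg
  linarith

theorem bddBelow_range_quadraticObjective [DecidableEq ι] {S : Matrix ι ι ℝ} (hS : S.PosDef)
    (f : ι → ℝ) : BddBelow (Set.range (quadraticObjective S f)) := by
  obtain ⟨c, hc⟩ := mulVec_surjective_iff_isUnit.mpr hS.isUnit f
  exact ⟨_, Set.forall_mem_range.mpr (quadraticObjective_le_of_mulVec_eq hS.posSemidef hc)⟩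

theorem sub_dotProduct_le_of_sum_sq_le {L : ℝ} (hL : 0 < L) {a b g : ι → ℝ}
    (h : ∑ i, (b i - (a i - (1 / L) * g i)) ^ 2 ≤ ∑ i, (a i - (a i - (1 / L) * g i)) ^ 2) :
    (b - a) ⬝ᵥ g ≤ -(L / 2) * ∑ i, (b i - a i) ^ 2 := by
  have hexpand : ∑ i, ((b i - a i) ^ 2 + 2 / L * ((b i - a i) * g i)) ≤ 0 := by
    rw [← sub_nonpos, ← Finset.sum_sub_distrib] at h
    convert h using 2 with i
    ring
  rw [Finset.sum_add_distrib, ← Finset.mul_sum] at hexpand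
  have hcancel : L / 2 * (2 / L) = 1 := by field_simp
  have hscaled := mul_nonpos_of_nonneg_of_nonpos (half_pos hL).le hexpand
  rw [mul_add, ← mul_assoc, hcancel, one_mul] at hscaled
  simp only [dotProduct, Pi.sub_apply]
  linarith

theorem le_quadraticObjective_sub_of_sum_sq_le [DecidableEq ι] {S : Matrix ι ι ℝ}
    (hS : S.IsHermitian) {lam : ℝ} (hlam : ∀ i, hS.eigenvalues i ≤ lam) {L : ℝ} (hL : 0 < L)
    {f a b : ι → ℝ}
    (h : ∑ i, (b i - (a i - (1 / L) * (S *ᵥ a - f) i)) ^ 2 ≤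
      ∑ i, (a i - (a i - (1 / L) * (S *ᵥ a - f) i)) ^ 2) :
    (L - lam) / 2 * ∑ i, (b i - a i) ^ 2 ≤ quadraticObjective S f a - quadraticObjective S f b := by
  have hstep := sub_dotProduct_le_of_sum_sq_le hL h
  have hexpand := quadraticObjective_sub (isHermitian_iff_isSymm.mp hS) f a b
  have hcurv := hS.dotProduct_mulVec_le_of_eigenvalues_le hlam (b - a)
  have hnorm : (b - a) ⬝ᵥ (b - a) = ∑ i, (b i - a i) ^ 2 := by
    simp only [dotProduct, Pi.sub_apply, sq]
  rw [hnorm] at hcurv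
  linarith

end QuadraticObjective

theorem tendsto_of_sufficient_decrease {u e : ℕ → ℝ} {c : ℝ} (hc : 0 < c)
    (hdec : ∀ t, c * e t ≤ u t - u (t + 1)) (he : ∀ t, 0 ≤ e t) (hu : BddBelow (Set.range u)) :
    (∃ l, Tendsto u atTop (nhds l)) ∧ Tendsto e atTop (nhds 0) := by
  have hanti : Antitone u := antitone_nat_of_succ_le fun t => by linarith [hdec t, mul_nonneg hc.le (he t)]
  have hconv := tendsto_atTop_ciInf hanti hu
  refine ⟨⟨_, hconv⟩, squeeze_zero he (fun t => (le_div_iff₀' hc).mpr (hdec t)) ?_⟩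
  simpa using (hconv.sub (hconv.comp (tendsto_add_atTop_nat 1))).div_const c

theorem gpa_sequence_convergence_general {n : ℕ}
    (S : Matrix (Fin n) (Fin n) ℝ) (f : Fin n → ℝ) (hPD : S.PosDef)
    (Q : (Fin n → ℝ) → ℝ)
    (hQ : ∀ p, Q p = (1/2) * (p ⬝ᵥ S.mulVec p) - f ⬝ᵥ p)
    (lam1 : ℝ) (hlam1 : IsGreatest (Set.range hPD.1.eigenvalues) lam1)
    (L : ℝ) (hL : lam1 < L)
    (Ω : Set (Fin n → ℝ))
    (p : ℕ → Fin n → ℝ) (hfeas : ∀ t, p t ∈ Ω)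
    (hiter : ∀ t, ∀ p'' ∈ Ω,
      ∑ i, (p (t+1) i - (p t i - (1/L) * (S.mulVec (p t) - f) i)) ^ 2 ≤
        ∑ i, (p'' i - (p t i - (1/L) * (S.mulVec (p t) - f) i)) ^ 2) :
    (∀ t, Q (p t) - Q (p (t+1)) ≥ ((L - lam1) / 2) * ∑ i, (p (t+1) i - p t i) ^ 2) ∧
    (∃ Qinf : ℝ, Tendsto (fun t => Q (p t)) atTop (nhds Qinf)) ∧
    Tendsto (fun t => Real.sqrt (∑ i, (p (t+1) i - p t i) ^ 2)) atTop (nhds 0) := by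
  obtain rfl : Q = quadraticObjective S f := funext hQ
  obtain ⟨i₁, hi₁⟩ := hlam1.1
  have hLpos : 0 < L := (hi₁ ▸ hPD.eigenvalues_pos i₁).trans hL
  have hdescent : ∀ t, (L - lam1) / 2 * ∑ i, (p (t+1) i - p t i) ^ 2 ≤
      quadraticObjective S f (p t) - quadraticObjective S f (p (t+1)) := fun t =>
    le_quadraticObjective_sub_of_sum_sq_le hPD.1 (fun i => hlam1.2 ⟨i, rfl⟩) hLpos
      (hiter t (p t) (hfeas t))
  obtain ⟨hconv, hstep⟩ := tendsto_of_sufficient_decrease (half_pos (sub_pos.mpr hL)) hdescent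
    (fun t => by positivity)
    ((bddBelow_range_quadraticObjective hPD f).mono
      (Set.range_comp_subset_range p (quadraticObjective S f)))
  exact ⟨hdescent, hconv, by simpa using hstep.sqrt⟩

theorem gpa_sequence_convergence {n k : ℕ}
    (S : Matrix (Fin n) (Fin n) ℝ) (f p0 δ : Fin n → ℝ) (hPD : S.PosDef)
    (hδ : ∀ i, 0 < δ i)
    (Q : (Fin n → ℝ) → ℝ)
    (hQ : ∀ p, Q p = (1/2) * (p ⬝ᵥ S.mulVec p) - f ⬝ᵥ p)
    (lam1 : ℝ) (hlam1 : IsGreatest (Set.range hPD.1.eigenvalues) lam1)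
    (L : ℝ) (hL : lam1 < L)
    (Ω : Set (Fin n → ℝ))
    (hΩ : Ω = {p | {i | p i ≠ p0 i}.ncard ≤ k ∧
      ∀ i, p i = p0 i ∨ p0 i + δ i ≤ p i ∨ p i ≤ p0 i - δ i})
    (p : ℕ → Fin n → ℝ) (hfeas : ∀ t, p t ∈ Ω)
    (hiter : ∀ t, ∀ p'' ∈ Ω,
      ∑ i, (p (t+1) i - (p t i - (1/L) * (S.mulVec (p t) - f) i)) ^ 2 ≤
        ∑ i, (p'' i - (p t i - (1/L) * (S.mulVec (p t) - f) i)) ^ 2) :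
    (∀ t, Q (p t) - Q (p (t+1)) ≥ ((L - lam1) / 2) * ∑ i, (p (t+1) i - p t i) ^ 2) ∧
    (∃ Qinf : ℝ, Tendsto (fun t => Q (p t)) atTop (nhds Qinf)) ∧
    Tendsto (fun t => Real.sqrt (∑ i, (p (t+1) i - p t i) ^ 2)) atTop (nhds 0) :=
  gpa_sequence_convergence_general S f hPD Q hQ lam1 hlam1 L hL Ω p hfeas hiter
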